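/- Let A be an n×n real symmetric negative definite matrix whose off-diagonal entries are all nonnegative (a_{ij} ≥ 0 for i ≠ j). If x ∈ ℝ^n satisfies (A x)_j ≥ 0 for every j, then x_j ≤ 0 for every j. -/

import Mathlib

/-!
Split `x = x⁺ - x⁻` into its positive and negative parts, which have disjoint supports.
Because the off-diagonal entries of `A` are nonnegative and the diagonal only pairs `x⁺ i`
with `x⁻ i`, we get `x⁺ ⬝ᵥ A *ᵥ x⁻ ≥ 0`; together with `x⁺ ⬝ᵥ A *ᵥ x ≥ 0` this gives
`x⁺ ⬝ᵥ A *ᵥ x⁺ ≥ 0`, so negative definiteness forces `x⁺ = 0`, i.e. `x ≤ 0`.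
-/

open Matrix

lemma posPart_mul_negPart_eq_zero {R : Type*} [Ring R] [LinearOrder R] [IsOrderedRing R]
    (a : R) : a⁺ * a⁻ = 0 := by
  rcases le_total a 0 with h | h
  · rw [posPart_eq_zero.mpr h, zero_mul]
  · rw [negPart_eq_zero.mpr h, mul_zero]

namespace Matrix

variable {ι R : Type*} [Fintype ι]

lemma dotProduct_mulVec_nonneg_of_offDiag_nonneg [CommSemiring R] [PartialOrder R]
    [IsOrderedRing R] (A : Matrix ι ι R) (hoff : ∀ i j, i ≠ j → 0 ≤ A i j) {u v : ι → R}
    (hu : 0 ≤ u) (hv : 0 ≤ v) (huv : ∀ i, u i * v i = 0) : 0 ≤ u ⬝ᵥ A *ᵥ v := by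
  simp only [dotProduct, mulVec, Finset.mul_sum]
  refine Finset.sum_nonneg fun i _ => Finset.sum_nonneg fun j _ => ?_
  rcases eq_or_ne i j with rfl | hij
  · rw [mul_left_comm, huv i, mul_zero]
  · exact mul_nonneg (hu i) (mul_nonneg (hoff i j hij) (hv j))

lemma nonpos_of_posDef_neg_of_mulVec_nonneg [CommRing R] [LinearOrder R] [IsStrictOrderedRing R]
    [StarRing R] [TrivialStar R] {A : Matrix ι ι R} (hnegdef : (-A).PosDef)
    (hoff : ∀ i j, i ≠ j → 0 ≤ A i j) {x : ι → R} (hx : 0 ≤ A *ᵥ x) : x ≤ 0 := by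
  rw [← posPart_eq_zero]
  by_contra hne
  have hneg : x⁺ ⬝ᵥ A *ᵥ x⁺ < 0 := by
    simpa [neg_mulVec] using hnegdef.dotProduct_mulVec_pos hne
  have hpos : 0 ≤ x⁺ ⬝ᵥ A *ᵥ x⁺ := by
    have hsplit : x⁺ = x + x⁻ := eq_add_of_sub_eq (posPart_sub_negPart x)
    have hx' : 0 ≤ x⁺ ⬝ᵥ A *ᵥ x :=
      Finset.sum_nonneg fun i _ => mul_nonneg (posPart_nonneg (x i)) (hx i)
    have hdisj : 0 ≤ x⁺ ⬝ᵥ A *ᵥ x⁻ :=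
      A.dotProduct_mulVec_nonneg_of_offDiag_nonneg hoff (posPart_nonneg x) (negPart_nonneg x)
        fun i => posPart_mul_negPart_eq_zero (x i)
    calc 0 ≤ x⁺ ⬝ᵥ A *ᵥ x + x⁺ ⬝ᵥ A *ᵥ x⁻ := add_nonneg hx' hdisj
      _ = x⁺ ⬝ᵥ A *ᵥ x⁺ := by rw [← dotProduct_add, ← mulVec_add, ← hsplit]
  exact hpos.not_gt hneg

end Matrix

theorem negativity_lemma_matrix_general {n : ℕ} (A : Matrix (Fin n) (Fin n) ℝ)
    (hnegdef : (-A).PosDef)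
    (hoff : ∀ i j, i ≠ j → 0 ≤ A i j)
    (x : Fin n → ℝ) (hx : ∀ j, 0 ≤ A.mulVec x j) :
    ∀ j, x j ≤ 0 :=
  nonpos_of_posDef_neg_of_mulVec_nonneg hnegdef hoff hx

theorem negativity_lemma_matrix {n : ℕ} (A : Matrix (Fin n) (Fin n) ℝ)
    (hsymm : A.IsSymm) (hnegdef : (-A).PosDef)
    (hoff : ∀ i j, i ≠ j → 0 ≤ A i j)
    (x : Fin n → ℝ) (hx : ∀ j, 0 ≤ A.mulVec x j) :
    ∀ j, x j ≤ 0 :=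
  negativity_lemma_matrix_general A hnegdef hoff x hx
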